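/- Let ρ be the 4×4 density matrix of the two-qubit pure state |ψ⟩ = (1/(2√2))[(κ₁+κ₂)|↓↓⟩ + i(κ₁−κ₂)|↑↓⟩ + i(κ₁−κ₂)|↓↑⟩ − (κ₁+κ₂)|↑↑⟩] with |κ₁| = |κ₂| = 1. Then the partial transpose of ρ with respect to the second qubit has eigenvalues {−1/2, 1/2, 1/2, 1/2}; hence the negativity N(ρ) = (‖ρ^{T_B}‖₁ − 1)/2 equals 1/2 and the log-negativity E_N(ρ) = log₂‖ρ^{T_B}‖₁ equals 1. -/

import Mathlib

open Complex Polynomial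

/-- The two-qubit state with general unit-modulus coefficients κ₁, κ₂. -/
noncomputable def psiKappa (κ1 κ2 : ℂ) : Fin 2 × Fin 2 → ℂ :=
  fun p =>
    (1 / (2 * (Real.sqrt 2 : ℂ))) *
      (![![κ1 + κ2, Complex.I * (κ1 - κ2)],
         ![Complex.I * (κ1 - κ2), -(κ1 + κ2)]] p.1 p.2)

noncomputable def rhoKappa (κ1 κ2 : ℂ) : Matrix (Fin 2 × Fin 2) (Fin 2 × Fin 2) ℂ :=
  Matrix.of fun a b => psiKappa κ1 κ2 a * (starRingEnd ℂ) (psiKappa κ1 κ2 b)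

/-- Partial transpose on the second qubit: (ρ^{T_B})_{(a,b),(c,d)} = ρ_{(a,d),(c,b)}. -/
noncomputable def ptB (ρ : Matrix (Fin 2 × Fin 2) (Fin 2 × Fin 2) ℂ) :
    Matrix (Fin 2 × Fin 2) (Fin 2 × Fin 2) ℂ :=
  Matrix.of fun a c => ρ (a.1, c.2) (c.1, a.2)

/-!
Writing `Ψ` for the coefficient matrix of a two-qubit vector `ψ`, the partial transpose of
`|ψ⟩⟨ψ|` is `(Ψ ⊗ 1) F (Ψᴴ ⊗ 1)`, with `F` the swap operator. Since `|κ₁| = |κ₂| = 1`, here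
`Ψ Ψᴴ = 1/2`, so `ρ^{T_B}` has the characteristic polynomial of `F / 2`: the eigenvalue `1/2` on
the three-dimensional symmetric subspace and `-1/2` on the singlet.
-/

open Matrix
open scoped Kronecker ComplexConjugate

theorem Matrix.charpoly_mul_mul_of_mul_eq_smul_one {K n : Type*} [Field K] [Fintype n]
    [DecidableEq n] {X Y : Matrix n n K} {r : K} (hr : r ≠ 0) (h : X * Y = r • 1)
    (A : Matrix n n K) : (X * A * Y).charpoly = (r • A).charpoly := by
  have hYX : Y * X = r • 1 := by
    have hright : X * (r⁻¹ • Y) = 1 := by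
      rw [mul_smul_comm, h, smul_smul, inv_mul_cancel₀ hr, one_smul]
    rw [← smul_right_inj (inv_ne_zero hr), ← smul_mul_assoc, mul_eq_one_comm.mp hright,
      smul_smul, inv_mul_cancel₀ hr, one_smul]
  rw [Matrix.mul_assoc, charpoly_mul_comm, Matrix.mul_assoc, hYX, mul_smul_comm, Matrix.mul_one]

def swapMatrix (R n : Type*) [DecidableEq n] [Zero R] [One R] : Matrix (n × n) (n × n) R :=
  Matrix.of fun p q => if p = q.swap then 1 else 0

theorem charpoly_smul_swapMatrix {R : Type*} [CommRing R] (r : R) :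
    (r • swapMatrix R (Fin 2)).charpoly = (X + C r) * (X - C r) ^ 3 := by
  rw [← charpoly_reindex finProdFinEquiv]
  have hreindex : reindex finProdFinEquiv finProdFinEquiv (r • swapMatrix R (Fin 2)) =
      !![r, 0, 0, 0; 0, 0, r, 0; 0, r, 0, 0; 0, 0, 0, r] := by
    ext i j
    fin_cases i <;> fin_cases j <;>
      simp [swapMatrix, finProdFinEquiv, Prod.ext_iff, Fin.divNat, Fin.modNat]
  rw [hreindex, Matrix.charpoly, Matrix.det_succ_row_zero]
  simp [Fin.sum_univ_succ, Matrix.det_fin_three, Matrix.charmatrix_apply, Matrix.diagonal_apply]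
  ring

theorem ptB_outerProduct_eq (ψ : Fin 2 × Fin 2 → ℂ) :
    ptB (Matrix.of fun a b => ψ a * conj (ψ b)) =
      (Matrix.of (Function.curry ψ) ⊗ₖ 1) * swapMatrix ℂ (Fin 2) *
        ((Matrix.of (Function.curry ψ))ᴴ ⊗ₖ 1) := by
  ext ⟨a, b⟩ ⟨c, d⟩
  simp [ptB, Matrix.mul_apply, swapMatrix, Fintype.sum_prod_type, Matrix.one_apply]

def kappaMatrix (κ1 κ2 : ℂ) : Matrix (Fin 2) (Fin 2) ℂ :=
  !![κ1 + κ2, I * (κ1 - κ2); I * (κ1 - κ2), -(κ1 + κ2)]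

theorem kappaMatrix_mul_conjTranspose {κ1 κ2 : ℂ} (h1 : ‖κ1‖ = 1) (h2 : ‖κ2‖ = 1) :
    kappaMatrix κ1 κ2 * (kappaMatrix κ1 κ2)ᴴ = (4 : ℂ) • 1 := by
  have hc1 : κ1 * conj κ1 = 1 := by rw [Complex.mul_conj', h1]; norm_num
  have hc2 : κ2 * conj κ2 = 1 := by rw [Complex.mul_conj', h2]; norm_num
  ext i j
  fin_cases i <;> fin_cases j <;>
    simp only [Fin.zero_eta, Fin.mk_one, Fin.isValue, kappaMatrix, mul_apply, Fin.sum_univ_two, conjTranspose_apply, of_apply, cons_val',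
      cons_val_zero, cons_val_one, cons_val_fin_one, RCLike.star_def, map_add, map_sub, map_neg,
      map_mul, conj_I, Matrix.smul_apply, smul_eq_mul, one_apply_eq, one_apply_ne, ne_eq, zero_ne_one,
      one_ne_zero, not_false_eq_true, mul_one, mul_zero]
  · linear_combination 2 * hc1 + 2 * hc2 +
      (κ1 * conj κ2 + κ2 * conj κ1 - κ1 * conj κ1 - κ2 * conj κ2) * I_sq
  · linear_combination -2 * I * (hc1 - hc2)
  · linear_combination 2 * I * (hc1 - hc2)
  · linear_combination 2 * hc1 + 2 * hc2 +
      (κ1 * conj κ2 + κ2 * conj κ1 - κ1 * conj κ1 - κ2 * conj κ2) * I_sq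

theorem of_curry_psiKappa (κ1 κ2 : ℂ) :
    Matrix.of (Function.curry (psiKappa κ1 κ2)) =
      (1 / (2 * (Real.sqrt 2 : ℂ))) • kappaMatrix κ1 κ2 := by
  ext i j
  fin_cases i <;> fin_cases j <;> rfl

theorem of_curry_psiKappa_mul_conjTranspose {κ1 κ2 : ℂ} (h1 : ‖κ1‖ = 1) (h2 : ‖κ2‖ = 1) :
    Matrix.of (Function.curry (psiKappa κ1 κ2)) * (Matrix.of (Function.curry (psiKappa κ1 κ2)))ᴴ
      = (1 / 2 : ℂ) • 1 := by
  have hsqrt : (Real.sqrt 2 : ℂ) ^ 2 = 2 := by norm_cast; simp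
  have hconj : star (1 / (2 * (Real.sqrt 2 : ℂ))) = 1 / (2 * (Real.sqrt 2 : ℂ)) := by
    simp [Complex.conj_ofReal]
  rw [of_curry_psiKappa, conjTranspose_smul, Matrix.smul_mul, Matrix.mul_smul,
    kappaMatrix_mul_conjTranspose h1 h2, smul_smul, smul_smul, hconj]
  congr 1
  field_simp
  rw [hsqrt]
  norm_num

/-- the partial transpose has eigenvalues {−1/2, 1/2, 1/2, 1/2}; hence the
    negativity (‖ρ^{T_B}‖₁ − 1)/2 = 1/2 and the log-negativity log₂‖ρ^{T_B}‖₁ = 1. -/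
theorem ptB_eigenvalues_negativity (κ1 κ2 : ℂ)
    (h1 : ‖κ1‖ = 1) (h2 : ‖κ2‖ = 1) :
    (ptB (rhoKappa κ1 κ2)).charpoly.roots = ({-(1/2 : ℂ), 1/2, 1/2, 1/2} : Multiset ℂ) ∧
    (((ptB (rhoKappa κ1 κ2)).charpoly.roots.map (fun z : ℂ => ‖z‖)).sum - 1) / 2 = 1/2 ∧
    Real.logb 2 (((ptB (rhoKappa κ1 κ2)).charpoly.roots.map (fun z : ℂ => ‖z‖)).sum) = 1 := by
  have hcharpoly : (ptB (rhoKappa κ1 κ2)).charpoly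
      = (({-(1/2 : ℂ), 1/2, 1/2, 1/2} : Multiset ℂ).map fun a => X - C a).prod := by
    rw [rhoKappa, ptB_outerProduct_eq,
      charpoly_mul_mul_of_mul_eq_smul_one (r := 1 / 2) (by norm_num), charpoly_smul_swapMatrix]
    · simp only [Multiset.insert_eq_cons, Multiset.map_cons, Multiset.map_singleton,
        Multiset.prod_cons, Multiset.prod_singleton, map_neg, sub_neg_eq_add]
      ring
    · rw [← mul_kronecker_mul, of_curry_psiKappa_mul_conjTranspose h1 h2, Matrix.one_mul,
        smul_kronecker, one_kronecker_one]
  have hroots := hcharpoly ▸ roots_multiset_prod_X_sub_C _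
  have hnorms : ((ptB (rhoKappa κ1 κ2)).charpoly.roots.map (fun z : ℂ => ‖z‖)).sum = 2 := by
    rw [hroots]; norm_num
  refine ⟨hroots, ?_, ?_⟩ <;> rw [hnorms]
  · norm_num
  · exact Real.logb_self_eq_one (by norm_num)
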